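/- arXiv:2510.05966 — 5 statements merged into one kernel-verified Lean document; each statement's English description precedes it below -/
import Mathlib

section
/- For every integer k ≥ 0 and every r ∈ (0,1), the monomial r^k admits the finite expansion r^k = ∑_{q=0}^{k} χ_{k,q} P_q(r), where χ_{k,q} = (-1)^q · √(2q+d) · (k+d-1)! · k! / ((k+d+q)! · (k-q)!). -/
open Finset

/-- The shifted normalized Jacobi polynomials from the paper. -/
noncomputable def jacobiP (d k : ℕ) (r : ℝ) : ℝ :=
  Real.sqrt (2 * k + d) *
    ∑ q ∈ Finset.range (k + 1),
      (-1 : ℝ) ^ q * (Nat.choose k q : ℝ) * (Nat.choose (k + q + d - 1) k : ℝ) * r ^ q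

/-- The expansion coefficients of the monomial `r^k` in the Jacobi polynomials. -/
noncomputable def jacobiChi (d k q : ℕ) : ℝ :=
  (-1 : ℝ) ^ q * Real.sqrt (2 * q + d) *
    (Nat.factorial (k + d - 1) : ℝ) * (Nat.factorial k : ℝ) /
      ((Nat.factorial (k + d + q) : ℝ) * (Nat.factorial (k - q) : ℝ))

/-!
Comparing coefficients of `r ^ j`, with `q = j + m` and `k = j + n`, the coefficient on the right is
`(k + d - 1)! k! / (j! (j + d - 1)!)` times the alternating sum over `m ≤ n` of
`(2m + a) (m + a - 1)! / (m! (n - m)! (n + m + a)!)`, `a = 2j + d`.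
Splitting `2m + a = (n + m + a) - (n - m)` shows that `n` times this sum telescopes, so it is `1`
for `n = 0` and `0` otherwise.
-/

open Nat

noncomputable def jacobiKernel (a n m : ℕ) : ℝ :=
  (2 * m + a : ℕ) * (m + a - 1)! / ((m ! : ℝ) * (n - m)! * (n + m + a)!)

noncomputable def jacobiKernelTelescope (a n m : ℕ) : ℝ :=
  (n - m : ℕ) * (m + a)! / ((m ! : ℝ) * (n - m)! * (n + m + a)!)

lemma mul_jacobiKernel_zero {a : ℕ} (ha : 0 < a) (n : ℕ) :
    n * jacobiKernel a n 0 = jacobiKernelTelescope a n 0 := by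
  obtain ⟨b, rfl⟩ := Nat.exists_eq_add_of_lt ha
  simp only [jacobiKernel, jacobiKernelTelescope, zero_add, Nat.sub_zero, add_tsub_cancel_right,
    Nat.factorial_succ]
  push_cast
  ring

lemma mul_jacobiKernel_succ (a : ℕ) {n m : ℕ} (hmn : m < n) :
    n * jacobiKernel a n (m + 1) =
      jacobiKernelTelescope a n (m + 1) + jacobiKernelTelescope a n m := by
  obtain ⟨s, rfl⟩ := Nat.exists_eq_add_of_lt hmn
  rw [jacobiKernel, jacobiKernelTelescope, jacobiKernelTelescope,
    show m + 1 + a - 1 = m + a by omega, show m + s + 1 - (m + 1) = s by omega,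
    show m + s + 1 - m = s + 1 by omega,
    show m + s + 1 + (m + 1) + a = (2 * m + s + a + 1) + 1 by omega,
    show m + s + 1 + m + a = 2 * m + s + a + 1 by omega, show m + 1 + a = (m + a) + 1 by omega]
  simp only [Nat.factorial_succ]
  push_cast
  field_simp
  ring

lemma jacobiKernelTelescope_self (a n : ℕ) : jacobiKernelTelescope a n n = 0 := by
  simp [jacobiKernelTelescope]

lemma sum_neg_one_pow_mul_jacobiKernel {a : ℕ} (ha : 0 < a) (n : ℕ) :
    ∑ m ∈ range (n + 1), (-1 : ℝ) ^ m * jacobiKernel a n m = if n = 0 then 1 else 0 := by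
  rcases Nat.eq_zero_or_pos n with rfl | hn
  · obtain ⟨b, rfl⟩ := Nat.exists_eq_add_of_lt ha
    simp [jacobiKernel, Nat.factorial_succ, Nat.factorial_ne_zero, Nat.cast_add_one_ne_zero]
  have htelescope : ∑ m ∈ range n, (-1 : ℝ) ^ m * (n * jacobiKernel a n (m + 1)) =
      jacobiKernelTelescope a n 0 := by
    have := sum_range_sub (fun m ↦ -(-1 : ℝ) ^ m * jacobiKernelTelescope a n m) n
    rw [jacobiKernelTelescope_self, mul_zero, zero_sub, pow_zero, neg_mul, one_mul, neg_neg] at this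
    rw [← this]
    refine sum_congr rfl fun m hm ↦ ?_
    rw [mul_jacobiKernel_succ a (mem_range.mp hm)]
    ring
  have hscaled : (n : ℝ) * ∑ m ∈ range (n + 1), (-1 : ℝ) ^ m * jacobiKernel a n m = 0 := by
    rw [sum_range_succ', mul_add, mul_sum, pow_zero, one_mul, mul_jacobiKernel_zero ha,
      ← htelescope, ← sum_add_distrib]
    exact sum_eq_zero fun m _ ↦ by ring
  rw [if_neg hn.ne']
  exact (mul_eq_zero.mp hscaled).resolve_left (by exact_mod_cast hn.ne')

noncomputable def jacobiCoeff (d k q : ℕ) : ℝ :=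
  Real.sqrt (2 * k + d) * ((-1 : ℝ) ^ q * (k.choose q : ℝ) * ((k + q + d - 1).choose k : ℝ))

lemma jacobiP_eq_sum_jacobiCoeff (d k : ℕ) (r : ℝ) :
    jacobiP d k r = ∑ q ∈ range (k + 1), jacobiCoeff d k q * r ^ q := by
  rw [jacobiP, mul_sum]
  exact sum_congr rfl fun q _ ↦ by rw [jacobiCoeff]; ring

lemma jacobiChi_mul_jacobiCoeff {d : ℕ} (hd : 0 < d) (j : ℕ) {n m : ℕ} (hmn : m ≤ n) :
    jacobiChi d (j + n) (j + m) * jacobiCoeff d (j + m) j =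
      (j + n + d - 1)! * (j + n)! / ((j ! : ℝ) * (j + d - 1)!) *
        ((-1) ^ m * jacobiKernel (2 * j + d) n m) := by
  obtain ⟨e, rfl⟩ : ∃ e, d = e + 1 := ⟨d - 1, by omega⟩
  obtain ⟨s, rfl⟩ : ∃ s, n = m + s := ⟨n - m, by omega⟩
  rw [jacobiChi, jacobiCoeff, jacobiKernel, Nat.cast_choose ℝ (by omega : j ≤ j + m),
    Nat.cast_choose ℝ (by omega : j + m ≤ j + m + j + (e + 1) - 1)]
  simp only [← add_assoc, Nat.add_sub_cancel, add_tsub_cancel_left]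
  ring_nf
  rw [Real.sq_sqrt (by positivity), show j * 2 + m + e - (j + m) = j + e by omega,
    Even.neg_one_pow ⟨j, by ring⟩]
  push_cast
  field_simp
  ring

lemma sum_jacobiChi_mul_jacobiCoeff {d : ℕ} (hd : 0 < d) (j n : ℕ) :
    ∑ m ∈ range (n + 1), jacobiChi d (j + n) (j + m) * jacobiCoeff d (j + m) j =
      if n = 0 then 1 else 0 := by
  rw [sum_congr rfl fun m hm ↦ jacobiChi_mul_jacobiCoeff hd j (mem_range_succ_iff.mp hm),
    ← mul_sum, sum_neg_one_pow_mul_jacobiKernel (by omega)]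
  split_ifs with hn
  · subst hn
    rw [add_zero]
    field_simp
  · rw [mul_zero]

theorem monomial_eq_sum_jacobiP_general (d : ℕ) (hd : 2 ≤ d) (k : ℕ) (r : ℝ) :
    r ^ k = ∑ q ∈ Finset.range (k + 1), jacobiChi d k q * jacobiP d q r := by
  have hcoeff : ∀ j ∈ range (k + 1),
      ∑ m ∈ range (k + 1 - j), jacobiChi d k (j + m) * jacobiCoeff d (j + m) j =
        if j = k then 1 else 0 := by
    intro j hj
    obtain ⟨n, rfl⟩ := Nat.exists_eq_add_of_le (mem_range_succ_iff.mp hj)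
    rw [show j + n + 1 - j = n + 1 by omega, sum_jacobiChi_mul_jacobiCoeff (by omega)]
    simp
  calc r ^ k = ∑ j ∈ range (k + 1), ∑ m ∈ range (k + 1 - j),
        jacobiChi d k (j + m) * jacobiCoeff d (j + m) j * r ^ j := by
        simp_rw [← sum_mul, sum_congr rfl fun j hj ↦ congrArg (· * r ^ j) (hcoeff j hj)]
        simp
    _ = ∑ q ∈ range (k + 1), ∑ j ∈ range (q + 1),
        jacobiChi d k q * jacobiCoeff d q j * r ^ j := by
        rw [← sum_range_diag_flip]
        refine sum_congr rfl fun q _ ↦ sum_congr rfl fun j hj ↦ ?_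
        rw [Nat.add_sub_cancel' (mem_range_succ_iff.mp hj)]
    _ = ∑ q ∈ range (k + 1), jacobiChi d k q * jacobiP d q r := by
        simp_rw [jacobiP_eq_sum_jacobiCoeff, mul_sum, mul_assoc]

/-- Expansion of the monomial `r^k` in the Jacobi polynomials. -/
theorem monomial_eq_sum_jacobiP (d : ℕ) (hd : 2 ≤ d) (k : ℕ) (r : ℝ)
    (hr : r ∈ Set.Ioo (0:ℝ) 1) :
    r ^ k = ∑ q ∈ Finset.range (k + 1), jacobiChi d k q * jacobiP d q r :=
  monomial_eq_sum_jacobiP_general d hd k r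
end

section
/- For real L ≥ 1, d ≥ 2, and 0 ≤ x ≤ L-1, the difference of digamma values satisfies ψ(L+d+x) - ψ(L-x) ≥ (2x+d)/(L + d/2). -/
/-!
Write `a = L - x`, `b = L + d + x` and `m = (a + b) / 2 = L + d / 2`. Iterating `ψ(z + 1) = ψ(z) + 1/z`
and using that `ψ` is increasing gives `ψ(b) - ψ(a) ≥ ∑_{k < N} (1/(a+k) - 1/(b+k))`. By AM-GM,
`(a+k)(b+k) ≤ (m+k)² < (m+k)(m+k+1)`, so each summand dominates
`(b-a)/(m+k) - (b-a)/(m+k+1)`; the sum telescopes to `(b-a)/m - (b-a)/(m+N)`, and `N → ∞`.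
-/

/-- The digamma function, the logarithmic derivative of the Gamma function. -/
noncomputable def digamma (x : ℝ) : ℝ := deriv (fun y => Real.log (Real.Gamma y)) x

open Real Set Filter Topology

lemma differentiableAt_log_Gamma {x : ℝ} (hx : 0 < x) :
    DifferentiableAt ℝ (fun y => log (Gamma y)) x :=
  (differentiableAt_Gamma fun m => ((neg_nonpos.2 (Nat.cast_nonneg m)).trans_lt hx).ne').log
    (Gamma_pos_of_pos hx).ne'

lemma digamma_add_one {x : ℝ} (hx : 0 < x) : digamma (x + 1) = digamma x + x⁻¹ := by
  unfold digamma
  rw [← deriv_comp_add_const, ← deriv_log,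
    ← deriv_add (differentiableAt_log_Gamma hx) (differentiableAt_log hx.ne')]
  apply EventuallyEq.deriv_eq
  filter_upwards [eventually_gt_nhds hx] with y hy
  simp only [Pi.add_apply, Gamma_add_one hy.ne', log_mul hy.ne' (Gamma_pos_of_pos hy).ne',
    add_comm]

lemma digamma_add_nat {x : ℝ} (hx : 0 < x) (N : ℕ) :
    digamma (x + N) = digamma x + ∑ k ∈ Finset.range N, (x + k)⁻¹ := by
  induction N with
  | zero => simp
  | succ n ih =>
    rw [Nat.cast_succ, ← add_assoc, digamma_add_one (by positivity), ih, Finset.sum_range_succ,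
      add_assoc]

lemma digamma_monotoneOn : MonotoneOn digamma (Ioi 0) := fun _ hu _ hv huv =>
  convexOn_log_Gamma.monotoneOn_deriv (fun _ hz => differentiableAt_log_Gamma hz) hu hv huv

lemma sum_inv_sub_inv_le_digamma_sub {a b : ℝ} (ha : 0 < a) (hab : a ≤ b) (N : ℕ) :
    ∑ k ∈ Finset.range N, ((a + k)⁻¹ - (b + k)⁻¹) ≤ digamma b - digamma a := by
  have hshift : digamma (a + N) ≤ digamma (b + N) :=
    digamma_monotoneOn (by simp only [mem_Ioi]; positivity) (by simp only [mem_Ioi]; linarith)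
      (by linarith)
  rw [digamma_add_nat ha, digamma_add_nat (ha.trans_le hab)] at hshift
  rw [Finset.sum_sub_distrib]
  linarith

lemma sub_div_midpoint_sub_le_inv_sub_inv {a b : ℝ} (ha : 0 < a) (hab : a ≤ b) :
    (b - a) / ((a + b) / 2) - (b - a) / ((a + b) / 2 + 1) ≤ a⁻¹ - b⁻¹ := by
  have hb : 0 < b := ha.trans_le hab
  have h_eq : (b - a) / ((a + b) / 2) - (b - a) / ((a + b) / 2 + 1)
      = (b - a) / ((a + b) / 2 * ((a + b) / 2 + 1)) := by
    field_simp
    ring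
  rw [h_eq, inv_sub_inv ha.ne' hb.ne', mul_comm a b]
  apply div_le_div_of_nonneg_left (by linarith) (by positivity)
  nlinarith [sq_nonneg (b - a)]

lemma sub_div_midpoint_sub_le_digamma_sub {a b : ℝ} (ha : 0 < a) (hab : a ≤ b) (N : ℕ) :
    (b - a) / ((a + b) / 2) - (b - a) / ((a + b) / 2 + N) ≤ digamma b - digamma a := by
  refine le_trans ?_ (sum_inv_sub_inv_le_digamma_sub ha hab N)
  have htelescope := Finset.sum_range_sub' (fun k : ℕ => (b - a) / ((a + b) / 2 + k)) N
  rw [Nat.cast_zero, add_zero] at htelescope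
  rw [← htelescope]
  refine Finset.sum_le_sum fun k _ => ?_
  have h := sub_div_midpoint_sub_le_inv_sub_inv (a := a + k) (b := b + k) (by positivity)
    (by linarith)
  rw [show b + k - (a + k) = b - a by ring, show (a + k + (b + k)) / 2 = (a + b) / 2 + k by ring]
    at h
  rwa [Nat.cast_succ, ← add_assoc]

lemma sub_div_midpoint_le_digamma_sub {a b : ℝ} (ha : 0 < a) (hab : a ≤ b) :
    (b - a) / ((a + b) / 2) ≤ digamma b - digamma a := by
  have hlim : Tendsto (fun N : ℕ => (b - a) / ((a + b) / 2) - (b - a) / ((a + b) / 2 + N))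
      atTop (𝓝 ((b - a) / ((a + b) / 2) - 0)) :=
    tendsto_const_nhds.sub <| tendsto_const_nhds.div_atTop <|
      tendsto_atTop_add_const_left _ _ tendsto_natCast_atTop_atTop
  simpa using le_of_tendsto' hlim (sub_div_midpoint_sub_le_digamma_sub ha hab)

theorem digamma_diff_lower_bound_general (L d x : ℝ) (hd : 2 ≤ d)
    (hx0 : 0 ≤ x) (hx1 : x ≤ L - 1) :
    (2 * x + d) / (L + d / 2) ≤ digamma (L + d + x) - digamma (L - x) := by
  have h := sub_div_midpoint_le_digamma_sub (a := L - x) (b := L + d + x) (by linarith)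
    (by linarith)
  convert h using 2 <;> ring

/-- For `L ≥ 1`, `d ≥ 2` and `0 ≤ x ≤ L - 1`,
`ψ(L+d+x) - ψ(L-x) ≥ (2x+d)/(L+d/2)`. -/
theorem digamma_diff_lower_bound (L d x : ℝ) (hL : 1 ≤ L) (hd : 2 ≤ d)
    (hx0 : 0 ≤ x) (hx1 : x ≤ L - 1) :
    (2 * x + d) / (L + d / 2) ≤ digamma (L + d + x) - digamma (L - x) :=
  digamma_diff_lower_bound_general L d x hd hx0 hx1
end

section
/- Let L ≥ 1 and d ≥ 2 be real. Then for all 0 ≤ x ≤ L-1, Γ(L+d)Γ(L) / (Γ(L+d+x)Γ(L-x)) ≤ exp(-2x(x+d)/(2L+d)). -/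
/-!
By the Euler product for `Γ` (in the form `Real.BohrMollerup.logGammaSeq`), the logarithm of
the reciprocal ratio is `∑ₘ log ((a+m)(a+m+d) / ((a+m+d+x)(a+m-x)))`. Since
`(a+d+x)(a-x) = a(a+d) - x(x+d)`, the bound `log t ≤ t - 1` makes each term at least
`x(x+d) / (a(a+d))`, and `a(a+d) ≤ c(c+1)` for `c = a + d/2` turns this into the telescoping
`x(x+d) (1/c - 1/(c+1))`. Summing over `m` gives `x(x+d) / (a + d/2) = 2x(x+d) / (2a+d)`.
-/

open Filter Real Finset Topology

namespace Real

variable {a d x : ℝ}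

lemma mul_inv_sub_inv_le_log_sub_log (hd : 0 ≤ d) (hx : 0 ≤ x) (hxa : x < a) :
    x * (x + d) * ((a + d / 2)⁻¹ - (a + d / 2 + 1)⁻¹) ≤
      log (a + d) + log a - (log (a + d + x) + log (a - x)) := by
  have ha : 0 < a := hx.trans_lt hxa
  have hax : 0 < a - x := sub_pos.mpr hxa
  have hprod : a * (a + d) ≤ (a + d / 2) * (a + d / 2 + 1) := by nlinarith
  have hnum : 0 < (a + d + x) * (a - x) := by positivity
  have hratio : 0 < (a + d + x) * (a - x) / (a * (a + d)) := by positivity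
  calc x * (x + d) * ((a + d / 2)⁻¹ - (a + d / 2 + 1)⁻¹)
      = x * (x + d) / ((a + d / 2) * (a + d / 2 + 1)) := by field_simp; ring
    _ ≤ x * (x + d) / (a * (a + d)) := by gcongr
    _ = 1 - (a + d + x) * (a - x) / (a * (a + d)) := by field_simp; ring
    _ ≤ -log ((a + d + x) * (a - x) / (a * (a + d))) := by
      linarith [log_le_sub_one_of_pos hratio]
    _ = log (a + d) + log a - (log (a + d + x) + log (a - x)) := by
      rw [log_div hnum.ne' (by positivity), log_mul (by positivity) hax.ne',
        log_mul ha.ne' (by positivity)]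
      ring

lemma logGammaSeq_add_sub_eq_sum (a d x : ℝ) (n : ℕ) :
    BohrMollerup.logGammaSeq (a + d + x) n + BohrMollerup.logGammaSeq (a - x) n -
        BohrMollerup.logGammaSeq (a + d) n - BohrMollerup.logGammaSeq a n =
      ∑ m ∈ range (n + 1),
        (log (a + m + d) + log (a + m) - (log (a + m + d + x) + log (a + m - x))) := by
  simp only [BohrMollerup.logGammaSeq, sum_sub_distrib, sum_add_distrib]
  ring_nf

lemma sum_range_inv_sub_inv (c : ℝ) (n : ℕ) :
    ∑ m ∈ range n, ((c + m)⁻¹ - (c + m + 1)⁻¹) = c⁻¹ - (c + n)⁻¹ := by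
  simpa [add_assoc] using sum_range_sub' (fun m : ℕ => (c + m)⁻¹) n

lemma tendsto_sum_range_inv_sub_inv (c : ℝ) :
    Tendsto (fun n : ℕ => ∑ m ∈ range n, ((c + m)⁻¹ - (c + m + 1)⁻¹)) atTop (𝓝 c⁻¹) := by
  simp_rw [sum_range_inv_sub_inv]
  simpa using tendsto_const_nhds.sub <| tendsto_inv_atTop_zero.comp <|
    tendsto_atTop_add_const_left _ c tendsto_natCast_atTop_atTop

lemma mul_div_le_log_Gamma_sub (hd : 0 ≤ d) (hx : 0 ≤ x) (hxa : x < a) :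
    x * (x + d) / (a + d / 2) ≤
      log (Gamma (a + d + x)) + log (Gamma (a - x)) - log (Gamma (a + d)) - log (Gamma a) := by
  have ha : 0 < a := hx.trans_lt hxa
  have hseq := (((BohrMollerup.tendsto_log_gamma (by positivity : 0 < a + d + x)).add
    (BohrMollerup.tendsto_log_gamma (sub_pos.mpr hxa))).sub
    (BohrMollerup.tendsto_log_gamma (by positivity : 0 < a + d))).sub
    (BohrMollerup.tendsto_log_gamma ha)
  have htel := ((tendsto_sum_range_inv_sub_inv (a + d / 2)).comp
    (tendsto_add_atTop_nat 1)).const_mul (x * (x + d))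
  refine le_of_tendsto_of_tendsto' htel hseq fun n => ?_
  rw [Function.comp_apply, mul_sum, logGammaSeq_add_sub_eq_sum]
  refine sum_le_sum fun m _ => ?_
  simpa only [add_right_comm a (d / 2) (m : ℝ)] using
    mul_inv_sub_inv_le_log_sub_log hd hx (by linarith [m.cast_nonneg (α := ℝ)])

lemma Gamma_mul_Gamma_div_le_exp (hd : 0 ≤ d) (hx : 0 ≤ x) (hxa : x < a) :
    Gamma (a + d) * Gamma a / (Gamma (a + d + x) * Gamma (a - x)) ≤
      exp (-(x * (x + d) / (a + d / 2))) := by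
  have ha : 0 < a := hx.trans_lt hxa
  have hΓ₁ := Gamma_pos_of_pos (by positivity : 0 < a + d)
  have hΓ₂ := Gamma_pos_of_pos ha
  have hΓ₃ := Gamma_pos_of_pos (by positivity : 0 < a + d + x)
  have hΓ₄ := Gamma_pos_of_pos (sub_pos.mpr hxa)
  refine (log_le_iff_le_exp (by positivity)).mp ?_
  rw [log_div (by positivity) (by positivity), log_mul hΓ₁.ne' hΓ₂.ne', log_mul hΓ₃.ne' hΓ₄.ne']
  linarith [mul_div_le_log_Gamma_sub hd hx hxa]

end Real

theorem gamma_ratio_le_exp_general (L d x : ℝ) (hd : 2 ≤ d)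
    (hx0 : 0 ≤ x) (hx1 : x ≤ L - 1) :
    Real.Gamma (L + d) * Real.Gamma L / (Real.Gamma (L + d + x) * Real.Gamma (L - x)) ≤
      Real.exp (-(2 * x * (x + d)) / (2 * L + d)) := by
  have hL : 0 < 2 * L + d := by linarith
  convert Real.Gamma_mul_Gamma_div_le_exp (d := d) (by linarith) hx0 (by linarith : x < L) using 2
  field_simp

/-- Gamma-function bound: for `L ≥ 1`, `d ≥ 2` and `0 ≤ x ≤ L - 1`,
`Γ(L+d)Γ(L)/(Γ(L+d+x)Γ(L-x)) ≤ exp(-2x(x+d)/(2L+d))`. -/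
theorem gamma_ratio_le_exp (L d x : ℝ) (hL : 1 ≤ L) (hd : 2 ≤ d)
    (hx0 : 0 ≤ x) (hx1 : x ≤ L - 1) :
    Real.Gamma (L + d) * Real.Gamma L / (Real.Gamma (L + d + x) * Real.Gamma (L - x)) ≤
      Real.exp (-(2 * x * (x + d)) / (2 * L + d)) :=
  gamma_ratio_le_exp_general L d x hd hx0 hx1
end

section
/- For integers d ≥ 2, ℓ ≥ 1, and 0 ≤ k ≤ 2ℓ-2, the ratio of factorials satisfies (2ℓ-2+d)!·(2ℓ-2)! / ((2ℓ-2+d+k)!·(2ℓ-2-k)!) ≤ exp(-2k(k+d)/(4ℓ-2+d)). -/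
lemma aux_t (t : ℝ) (h0 : 0 ≤ t) (h1 : t ≤ 1) :
    (1 - t) / (1 + t) ≤ Real.exp (-(2 * t)) := by
  have hQ : Real.exp t ≤ 1 + t + t^2/2 + t^3/6 + 5/96 * t^4 := by
    have h := Real.exp_bound' h0 h1 (n := 4) (by norm_num)
    have hs : (∑ m ∈ Finset.range 4, t ^ m / m.factorial) = 1 + t + t^2/2 + t^3/6 := by
      simp [Finset.sum_range_succ, Nat.factorial]
    rw [hs] at h
    refine h.trans_eq ?_
    norm_num [Nat.factorial]; ring
  have hE := Real.exp_pos t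
  have hEE : (1 - t) * (Real.exp t * Real.exp t) ≤ 1 + t := by
    have h1t : (0:ℝ) ≤ 1 - t := by linarith
    calc (1 - t) * (Real.exp t * Real.exp t)
        ≤ (1 - t) * ((1 + t + t^2/2 + t^3/6 + 5/96 * t^4) * (1 + t + t^2/2 + t^3/6 + 5/96 * t^4)) := by
          apply mul_le_mul_of_nonneg_left _ h1t
          exact mul_le_mul hQ hQ hE.le (by nlinarith)
      _ ≤ 1 + t := by
          nlinarith [pow_nonneg h0 3, pow_nonneg h0 4, pow_nonneg h0 5, pow_nonneg h0 6,
            pow_nonneg h0 7, pow_nonneg h0 8, pow_nonneg h0 9]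
  have h2 : Real.exp (-(2*t)) = (Real.exp t * Real.exp t)⁻¹ := by
    rw [← Real.exp_add, ← Real.exp_neg]; ring_nf
  rw [h2, div_le_iff₀ (by linarith : (0:ℝ) < 1 + t), inv_mul_eq_div,
    le_div_iff₀ (by positivity : (0:ℝ) < Real.exp t * Real.exp t)]
  exact hEE

lemma aux_ab (a b : ℝ) (ha : 0 ≤ a) (hab : a ≤ b) (hb : 0 < b) :
    a / b ≤ Real.exp (-(2 * (b - a)) / (a + b)) := by
  have hs : (0:ℝ) < a + b := by linarith
  set t : ℝ := (b - a) / (a + b) with ht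
  have h0 : 0 ≤ t := div_nonneg (by linarith) hs.le
  have h1 : t ≤ 1 := (div_le_one hs).mpr (by linarith)
  have hab' : a / b = (1 - t) / (1 + t) := by
    have hts : t * (a + b) = b - a := by
      rw [ht, div_mul_cancel₀ _ hs.ne']
    rw [div_eq_div_iff hb.ne' (by positivity : (1:ℝ)+t ≠ 0)]
    linear_combination hts
  have hexp : -(2 * (b - a)) / (a + b) = -(2 * t) := by
    rw [ht]; ring
  rw [hab', hexp]
  exact aux_t t h0 h1

lemma ratio_aux (n d k : ℕ) (hk : k ≤ n) :
    ((n + d).factorial : ℝ) * (n.factorial : ℝ) /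
        (((n + d + k).factorial : ℝ) * ((n - k).factorial : ℝ)) ≤
      Real.exp (-(2 * (k:ℝ) * ((k:ℝ) + d)) / (2 * n + d + 1)) := by
  induction k with
  | zero =>
      simp only [Nat.cast_zero, add_zero, Nat.sub_zero]
      rw [div_self (by positivity), show -(2 * (0:ℝ) * ((0:ℝ) + d)) / (2 * n + d + 1) = 0 by ring,
        Real.exp_zero]
  | succ k ih =>
      have hk' : k ≤ n := Nat.le_of_succ_le hk
      have ih' := ih hk'
      have hfac1 : ((n + d + (k+1)).factorial : ℝ) = (((n + d + k : ℕ) : ℝ) + 1) * ((n + d + k).factorial : ℝ) := by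
        rw [show n + d + (k+1) = (n + d + k) + 1 by ring, Nat.factorial_succ]; push_cast; ring
      have hnk : n - k = (n - (k+1)) + 1 := by omega
      have hfac2 : ((n - k).factorial : ℝ) = (((n - (k+1) : ℕ) : ℝ) + 1) * ((n - (k+1)).factorial : ℝ) := by
        rw [hnk, Nat.factorial_succ]; push_cast; ring
      have hpos1 : ((n + d + k).factorial : ℝ) ≠ 0 := by positivity
      have hpos2 : ((n - (k+1)).factorial : ℝ) ≠ 0 := by positivity
      have hx : (((n + d + k : ℕ) : ℝ) + 1) ≠ 0 := by positivity
      have hy : (((n - (k+1) : ℕ) : ℝ) + 1) ≠ 0 := by positivity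
      have hsplit : ((n + d).factorial : ℝ) * (n.factorial : ℝ) /
            (((n + d + (k+1)).factorial : ℝ) * ((n - (k+1)).factorial : ℝ))
          = (((n + d).factorial : ℝ) * (n.factorial : ℝ) /
            (((n + d + k).factorial : ℝ) * ((n - k).factorial : ℝ))) *
            ((((n - (k+1) : ℕ) : ℝ) + 1) / (((n + d + k : ℕ) : ℝ) + 1)) := by
        set A := ((n + d).factorial : ℝ) * (n.factorial : ℝ) with hA
        set F1 := ((n + d + k).factorial : ℝ) with hF1
        set F2 := ((n - (k+1)).factorial : ℝ) with hF2
        set x := ((n + d + k : ℕ) : ℝ) + 1 with hxx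
        set y := ((n - (k+1) : ℕ) : ℝ) + 1 with hyy
        rw [hfac1, hfac2]
        field_simp
      rw [hsplit]
      have hstep : ((((n - (k+1) : ℕ) : ℝ)) + 1) / (((n + d + k : ℕ) : ℝ) + 1)
          ≤ Real.exp (-(2 * ((((n + d + k : ℕ) : ℝ) + 1) - (((n - (k+1) : ℕ) : ℝ) + 1))) /
              ((((n - (k+1) : ℕ) : ℝ) + 1) + (((n + d + k : ℕ) : ℝ) + 1))) := by
        apply aux_ab
        · positivity
        · have h : (n - (k+1) : ℕ) ≤ n + d + k := by omega
          have := (Nat.cast_le (α := ℝ)).mpr h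
          linarith
        · positivity
      have hmul := mul_le_mul ih' hstep (by positivity) (Real.exp_pos _).le
      refine hmul.trans_eq ?_
      rw [← Real.exp_add]
      congr 1
      have hc1 : ((n - (k+1) : ℕ) : ℝ) = (n : ℝ) - (k : ℝ) - 1 := by
        have h : ((n - (k+1) : ℕ) : ℝ) = ((n : ℕ) : ℝ) - ((k+1 : ℕ) : ℝ) := by
          rw [← Nat.cast_sub hk]
        rw [h]; push_cast; ring
      push_cast [hc1]
      ring

/-- For integers `d ≥ 2`, `ℓ ≥ 1` and `0 ≤ k ≤ 2ℓ-2`, the factorial ratio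
`(2ℓ-2+d)!(2ℓ-2)!/((2ℓ-2+d+k)!(2ℓ-2-k)!)` is at most `exp(-2k(k+d)/(4ℓ-2+d))`. -/
theorem factorial_ratio_le_exp (d ℓ k : ℕ) (hd : 2 ≤ d) (hℓ : 1 ≤ ℓ)
    (hk : k ≤ 2 * ℓ - 2) :
    ((2 * ℓ - 2 + d).factorial : ℝ) * ((2 * ℓ - 2).factorial : ℝ) /
        (((2 * ℓ - 2 + d + k).factorial : ℝ) * ((2 * ℓ - 2 - k).factorial : ℝ)) ≤
      Real.exp (-(2 * (k : ℝ) * ((k : ℝ) + d)) / (4 * (ℓ : ℝ) - 2 + d)) := by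
  refine (ratio_aux (2 * ℓ - 2) d k hk).trans (Real.exp_le_exp.mpr ?_)
  have hcast : ((2 * ℓ - 2 : ℕ) : ℝ) = 2 * (ℓ : ℝ) - 2 := by
    have h2 : (2 : ℕ) ≤ 2 * ℓ := by omega
    rw [Nat.cast_sub h2]; push_cast; ring
  rw [hcast]
  have hℓ' : (1 : ℝ) ≤ (ℓ : ℝ) := by exact_mod_cast hℓ
  have hd' : (2 : ℝ) ≤ (d : ℝ) := by exact_mod_cast hd
  have hD1 : (0:ℝ) < 2 * (2 * (ℓ:ℝ) - 2) + d + 1 := by linarith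
  have hD2 : (0:ℝ) < 4 * (ℓ:ℝ) - 2 + d := by linarith
  rw [neg_div, neg_div, neg_le_neg_iff]
  apply div_le_div_of_nonneg_left _ hD1 (by linarith)
  positivity
end

section
/- There exists a constant C_d > 0 depending only on the integer d ≥ 2 such that for all integers ℓ ≥ 1, ∑_{k=0}^{2ℓ-2} (2k+d)/ℓ² · (2ℓ-2+d)!·(2ℓ-2)! / ((2ℓ-2+d+k)!·(2ℓ-2-k)!) ≤ C_d / ℓ. In particular one may take C_d = 4 d² e^d. -/
open Finset

/-- There is a constant `C_d > 0` (one may take `C_d = 4d²e^d`) such that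
`∑_{k=0}^{2ℓ-2} (2k+d)/ℓ² · (2ℓ-2+d)!(2ℓ-2)!/((2ℓ-2+d+k)!(2ℓ-2-k)!) ≤ C_d/ℓ`. -/
theorem sum_factorial_ratio_le (d : ℕ) (hd : 2 ≤ d) :
    ∃ C : ℝ, 0 < C ∧ C = 4 * (d : ℝ) ^ 2 * Real.exp d ∧
      ∀ ℓ : ℕ, 1 ≤ ℓ →
        ∑ k ∈ Finset.range (2 * ℓ - 1),
            (2 * (k : ℝ) + d) / (ℓ : ℝ) ^ 2 *
              (((2 * ℓ - 2 + d).factorial : ℝ) * ((2 * ℓ - 2).factorial : ℝ) /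
                (((2 * ℓ - 2 + d + k).factorial : ℝ) * ((2 * ℓ - 2 - k).factorial : ℝ))) ≤
          C / ℓ := by
  refine ⟨4 * (d : ℝ) ^ 2 * Real.exp d, by positivity, rfl, ?_⟩
  intro ℓ hℓ
  set n := 2 * ℓ - 2 with hn
  have hrange : 2 * ℓ - 1 = n + 1 := by omega
  set a : ℕ → ℝ := fun k =>
    (n.descFactorial k : ℝ) * ((n + d).factorial : ℝ) / ((n + d + k).factorial : ℝ) with ha
  have hℓR : (1 : ℝ) ≤ ℓ := by exact_mod_cast hℓ
  have ha_nonneg : ∀ k, 0 ≤ a k := by intro k; rw [ha]; positivity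
  have hrec : ∀ k, ((n : ℝ) + d + k + 1) * a (k + 1) = ((n - k : ℕ) : ℝ) * a k := by
    intro k
    rw [ha]
    simp only
    have h1 : (n + d + (k + 1)).factorial = (n + d + k + 1) * (n + d + k).factorial := by
      rw [show n + d + (k + 1) = (n + d + k) + 1 by omega, Nat.factorial_succ]
    rw [Nat.descFactorial_succ, h1]
    have hfac : (0:ℝ) < ((n + d + k).factorial : ℝ) := by positivity
    push_cast
    field_simp
  -- each term bounded
  have hkey : ∀ k, k ≤ n → (2 * (k:ℝ) + d) * a k ≤ (2 * (n:ℝ) + d + 1) * (a k - a (k + 1)) := by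
    intro k hk
    have hsub : ((n - k : ℕ) : ℝ) = (n : ℝ) - k := by
      push_cast [hk]; ring
    have h2 : ((n : ℝ) + d + k + 1) * (a k - a (k + 1)) = (2 * k + d + 1) * a k := by
      have h := hrec k
      rw [hsub] at h
      linear_combination -h
    have hkn : (k : ℝ) ≤ n := by exact_mod_cast hk
    have hdR : (2 : ℝ) ≤ d := by exact_mod_cast hd
    have hD : (0 : ℝ) < (n : ℝ) + d + k + 1 := by positivity
    have h6 := ha_nonneg k
    nlinarith [mul_nonneg h6 (sub_nonneg.mpr hkn), mul_nonneg (mul_nonneg h6 (sub_nonneg.mpr hkn)) (by positivity : (0:ℝ) ≤ (d:ℝ)), mul_nonneg (mul_nonneg h6 (sub_nonneg.mpr hkn)) (by positivity : (0:ℝ) ≤ (k:ℝ))]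
  have hℓ2 : (0:ℝ) < (ℓ:ℝ)^2 := by positivity
  have hterm : ∀ k ∈ Finset.range (n + 1),
      (2 * (k : ℝ) + d) / (ℓ : ℝ) ^ 2 *
        (((n + d).factorial : ℝ) * ((n).factorial : ℝ) /
          (((n + d + k).factorial : ℝ) * ((n - k).factorial : ℝ))) ≤
      (2 * (n:ℝ) + d + 1) / (ℓ : ℝ) ^ 2 * (a k - a (k + 1)) := by
    intro k hkmem
    have hk : k ≤ n := by simpa [Nat.lt_succ_iff] using Finset.mem_range.mp hkmem
    have heq : ((n + d).factorial : ℝ) * ((n).factorial : ℝ) /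
        (((n + d + k).factorial : ℝ) * ((n - k).factorial : ℝ)) = a k := by
      have hf : ((n - k).factorial) * n.descFactorial k = n.factorial :=
        Nat.factorial_mul_descFactorial hk
      rw [ha]
      simp only
      rw [← hf]
      have h1 : (0:ℝ) < ((n + d + k).factorial : ℝ) := by positivity
      have h2 : (0:ℝ) < ((n - k).factorial : ℝ) := by positivity
      push_cast
      field_simp
    rw [heq]
    rw [div_mul_eq_mul_div, div_mul_eq_mul_div, div_le_div_iff₀ hℓ2 hℓ2]
    have := hkey k hk
    nlinarith [this, hℓ2]
  rw [hrange]
  calc ∑ k ∈ Finset.range (n + 1),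
      (2 * (k : ℝ) + d) / (ℓ : ℝ) ^ 2 *
        (((n + d).factorial : ℝ) * ((n).factorial : ℝ) /
          (((n + d + k).factorial : ℝ) * ((n - k).factorial : ℝ)))
      ≤ ∑ k ∈ Finset.range (n + 1), (2 * (n:ℝ) + d + 1) / (ℓ : ℝ) ^ 2 * (a k - a (k + 1)) :=
        Finset.sum_le_sum hterm
    _ = (2 * (n:ℝ) + d + 1) / (ℓ : ℝ) ^ 2 * (a 0 - a (n + 1)) := by
        rw [← Finset.mul_sum, Finset.sum_range_sub' a]
    _ ≤ (2 * (n:ℝ) + d + 1) / (ℓ : ℝ) ^ 2 * 1 := by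
        have ha0 : a 0 = 1 := by
          have hne : ((n + d).factorial : ℝ) ≠ 0 := by positivity
          rw [ha]; simp [hne]
        have := ha_nonneg (n + 1)
        have hpos : (0:ℝ) ≤ (2 * (n:ℝ) + d + 1) / (ℓ : ℝ) ^ 2 := by positivity
        apply mul_le_mul_of_nonneg_left _ hpos
        rw [ha0]; linarith
    _ ≤ 4 * (d : ℝ) ^ 2 * Real.exp d / ℓ := by
        rw [mul_one, div_le_div_iff₀ hℓ2 (by linarith : (0:ℝ) < (ℓ:ℝ))]
        have hnℓ : (n : ℝ) ≤ 2 * (ℓ:ℝ) - 2 := by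
          rw [hn]; push_cast [show (2:ℕ) ≤ 2 * ℓ by omega]; ring_nf; norm_num
        have hexp : (d:ℝ) + 1 ≤ Real.exp d := by
          have := Real.add_one_le_exp (d:ℝ); linarith
        have hdR : (2 : ℝ) ≤ d := by exact_mod_cast hd
        have h1 : 2*(n:ℝ)+d+1 ≤ (4+(d:ℝ))*ℓ := by
          nlinarith [mul_nonneg (by linarith : (0:ℝ) ≤ (d:ℝ)) (by linarith : (0:ℝ) ≤ (ℓ:ℝ)-1)]
        have h2 : (4:ℝ)+d ≤ 4*(d:ℝ)^2*Real.exp d := by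
          have h3 : 4*(d:ℝ)^2*((d:ℝ)+1) ≤ 4*(d:ℝ)^2*Real.exp d :=
            mul_le_mul_of_nonneg_left hexp (by positivity)
          nlinarith [h3, hdR]
        calc (2*(n:ℝ)+d+1)*ℓ ≤ ((4+(d:ℝ))*ℓ)*ℓ :=
              mul_le_mul_of_nonneg_right h1 (by linarith)
          _ = (4+(d:ℝ))*(ℓ:ℝ)^2 := by ring
          _ ≤ 4*(d:ℝ)^2*Real.exp d * (ℓ:ℝ)^2 := mul_le_mul_of_nonneg_right h2 hℓ2.le
end
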